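/- The restricted subproblem solve suffices when the trust region is inactive: suppose ω̃ ∈ ℝ^m minimizes (1/2)ωᵀGᵀWGω − bᵀω over the simplex {ω ∈ ℝ^m : 𝟙ᵀω = 1, ω ≥ 0}. If ‖WGω̃‖_∞ ≤ δ, then (ω̃, 0) is an optimal solution of the dual subproblem. -/

import Mathlib

/-!
Put `v = W G ω̃`. Since `W` is positive semidefinite, the quadratic lies above its tangent at
`G ω̃`, so `-½ xᵀWx ≤ ½ (Gω̃)ᵀW(Gω̃) - vᵀx` for `x = Gω + γ`. Minimality of `ω̃` on the convex
simplex gives the variational inequality `bᵀ(ω - ω̃) ≤ vᵀG(ω - ω̃)`, and `‖v‖_∞ ≤ δ` gives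
`-vᵀγ ≤ δ ‖γ‖₁`. Adding the three bounds the dual objective at `(ω, γ)` by its value at `(ω̃, 0)`.
-/

open Matrix

/-- Objective of the dual subproblem. -/
noncomputable def dualObj (n m : ℕ) (G : Matrix (Fin n) (Fin m) ℝ) (b : Fin m → ℝ)
    (W : Matrix (Fin n) (Fin n) ℝ) (δ : ℝ) (ω : Fin m → ℝ) (γ : Fin n → ℝ) : ℝ :=
  -(1 / 2) * ((G *ᵥ ω + γ) ⬝ᵥ W *ᵥ (G *ᵥ ω + γ)) + b ⬝ᵥ ω - δ * ∑ i, |γ i|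

/-- Feasibility for the dual subproblem: `𝟙ᵀω = 1` and `ω ≥ 0`. -/
def dualFeas (m : ℕ) (ω : Fin m → ℝ) : Prop :=
  ∑ j, ω j = 1 ∧ ∀ j, 0 ≤ ω j

open Set Filter Topology

theorem dualFeas_iff_mem_stdSimplex {m : ℕ} {ω : Fin m → ℝ} :
    dualFeas m ω ↔ ω ∈ stdSimplex ℝ (Fin m) :=
  and_comm

theorem nonneg_of_forall_Ioc_add_mul_nonneg {a c : ℝ} (h : ∀ t ∈ Ioc (0 : ℝ) 1, 0 ≤ a + c * t) :
    0 ≤ a := by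
  have hlim : Tendsto (fun t => a + c * t) (𝓝[>] 0) (𝓝 a) :=
    ((by fun_prop : Continuous fun t : ℝ => a + c * t).tendsto' 0 a (by simp)).mono_left
      nhdsWithin_le_nhds
  refine ge_of_tendsto hlim ?_
  filter_upwards [Ioc_mem_nhdsGT one_pos] with t ht using h t ht

theorem abs_dotProduct_le_mul_sum_abs {ι R : Type*} [Fintype ι] [CommRing R] [LinearOrder R]
    [IsStrictOrderedRing R] {v : ι → R} {δ : R} (hv : ∀ i, |v i| ≤ δ) (γ : ι → R) :
    |v ⬝ᵥ γ| ≤ δ * ∑ i, |γ i| := by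
  rw [Finset.mul_sum]
  refine (Finset.abs_sum_le_sum_abs _ _).trans (Finset.sum_le_sum fun i _ => ?_)
  rw [abs_mul]
  exact mul_le_mul_of_nonneg_right (hv i) (abs_nonneg _)

namespace Matrix

section CommSemiring

variable {ι κ R : Type*} [Fintype ι] [Fintype κ] [CommSemiring R]

theorem IsSymm.dotProduct_mulVec_comm {Q : Matrix ι ι R} (hQ : Q.IsSymm) (x y : ι → R) :
    x ⬝ᵥ Q *ᵥ y = y ⬝ᵥ Q *ᵥ x := by
  rw [dotProduct_mulVec, ← mulVec_transpose, hQ.eq, dotProduct_comm]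

theorem IsSymm.dotProduct_mulVec_add_smul {Q : Matrix ι ι R} (hQ : Q.IsSymm) (x d : ι → R)
    (t : R) :
    (x + t • d) ⬝ᵥ Q *ᵥ (x + t • d)
      = x ⬝ᵥ Q *ᵥ x + 2 * t * (d ⬝ᵥ Q *ᵥ x) + t ^ 2 * (d ⬝ᵥ Q *ᵥ d) := by
  simp only [mulVec_add, mulVec_smul, dotProduct_add, add_dotProduct, dotProduct_smul,
    smul_dotProduct, smul_eq_mul, hQ.dotProduct_mulVec_comm x d]
  ring

omit [Fintype ι] in
theorem IsSymm.transpose_mul_mul {W : Matrix κ κ R} (hW : W.IsSymm) (G : Matrix κ ι R) :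
    (Gᵀ * W * G).IsSymm := by
  simp [IsSymm, transpose_mul, hW.eq, Matrix.mul_assoc]

theorem dotProduct_transpose_mul_mul_mulVec (W : Matrix κ κ R) (G : Matrix κ ι R)
    (x y : ι → R) : x ⬝ᵥ (Gᵀ * W * G) *ᵥ y = G *ᵥ x ⬝ᵥ W *ᵥ G *ᵥ y := by
  rw [← mulVec_mulVec, ← mulVec_mulVec, dotProduct_mulVec, vecMul_transpose]

end CommSemiring

variable {ι : Type*} [Fintype ι]

theorem IsSymm.dotProduct_sub_le_of_isMinOn {Q : Matrix ι ι ℝ} (hQ : Q.IsSymm) {b : ι → ℝ}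
    {S : Set (ι → ℝ)} (hS : Convex ℝ S) {x₀ : ι → ℝ} (hx₀ : x₀ ∈ S)
    (hmin : IsMinOn (fun x => 1 / 2 * (x ⬝ᵥ Q *ᵥ x) - b ⬝ᵥ x) S x₀) {x : ι → ℝ} (hx : x ∈ S) :
    b ⬝ᵥ (x - x₀) ≤ (x - x₀) ⬝ᵥ Q *ᵥ x₀ := by
  set d := x - x₀
  suffices 0 ≤ d ⬝ᵥ Q *ᵥ x₀ - b ⬝ᵥ d by linarith
  refine nonneg_of_forall_Ioc_add_mul_nonneg (c := 1 / 2 * (d ⬝ᵥ Q *ᵥ d)) fun t ht => ?_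
  have hxt : x₀ + t • d ∈ S := by
    simpa [d] using hS.add_smul_sub_mem hx₀ hx (Ioc_subset_Icc_self ht)
  have hle := hmin hxt
  simp only [mem_ofPred_eq, hQ.dotProduct_mulVec_add_smul, dotProduct_add, dotProduct_smul,
    smul_eq_mul] at hle
  have : 0 ≤ t * (d ⬝ᵥ Q *ᵥ x₀ - b ⬝ᵥ d + 1 / 2 * (d ⬝ᵥ Q *ᵥ d) * t) := by linarith
  exact nonneg_of_mul_nonneg_right this ht.1

theorem PosSemidef.two_mul_dotProduct_mulVec_sub_le {W : Matrix ι ι ℝ} (hW : W.PosSemidef)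
    (x y : ι → ℝ) : 2 * (x ⬝ᵥ W *ᵥ y) - y ⬝ᵥ W *ᵥ y ≤ x ⬝ᵥ W *ᵥ x := by
  have hsymm : W.IsSymm := isHermitian_iff_isSymm.mp hW.isHermitian
  have hsq := hW.dotProduct_mulVec_nonneg (x - y)
  simp only [star_trivial, mulVec_sub, dotProduct_sub, sub_dotProduct,
    hsymm.dotProduct_mulVec_comm y x] at hsq
  linarith

end Matrix

theorem stmt18_general (n m : ℕ)
    (G : Matrix (Fin n) (Fin m) ℝ) (b : Fin m → ℝ)
    (W : Matrix (Fin n) (Fin n) ℝ) (hW : W.PosDef) (δ : ℝ)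
    (ωt : Fin m → ℝ) (hfeas : dualFeas m ωt)
    (hopt : ∀ ω : Fin m → ℝ, dualFeas m ω →
      (1 / 2) * (ωt ⬝ᵥ (Gᵀ * W * G) *ᵥ ωt) - b ⬝ᵥ ωt
        ≤ (1 / 2) * (ω ⬝ᵥ (Gᵀ * W * G) *ᵥ ω) - b ⬝ᵥ ω)
    (hin : ∀ i, |(W *ᵥ G *ᵥ ωt) i| ≤ δ) :
    dualFeas m ωt ∧
    ∀ (ω : Fin m → ℝ) (γ : Fin n → ℝ), dualFeas m ω →
      dualObj n m G b W δ ω γ ≤ dualObj n m G b W δ ωt 0 := by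
  refine ⟨hfeas, fun ω γ hω => ?_⟩
  have hWsymm : W.IsSymm := isHermitian_iff_isSymm.mp hW.isHermitian
  have hvariational := (hWsymm.transpose_mul_mul G).dotProduct_sub_le_of_isMinOn
    (convex_stdSimplex ℝ (Fin m)) (dualFeas_iff_mem_stdSimplex.mp hfeas)
    (fun ω' hω' => hopt ω' (dualFeas_iff_mem_stdSimplex.mpr hω'))
    (dualFeas_iff_mem_stdSimplex.mp hω)
  rw [dotProduct_transpose_mul_mul_mulVec, mulVec_sub, sub_dotProduct, dotProduct_sub]
    at hvariational
  have htangent := hW.posSemidef.two_mul_dotProduct_mulVec_sub_le (G *ᵥ ω + γ) (G *ᵥ ωt)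
  rw [add_dotProduct, dotProduct_comm γ] at htangent
  have hγ := (abs_le.mp (abs_dotProduct_le_mul_sum_abs hin γ)).1
  simp only [dualObj, add_zero, Pi.zero_apply, abs_zero, Finset.sum_const_zero, mul_zero,
    sub_zero]
  linarith

/-- the restricted subproblem solve suffices when the trust region is
inactive: if `ω̃` minimizes `(1/2)ωᵀGᵀWGω − bᵀω` over the simplex and
`‖WGω̃‖_∞ ≤ δ`, then `(ω̃, 0)` is an optimal solution of the dual subproblem. -/
theorem stmt18 (n m : ℕ) [NeZero n] [NeZero m]
    (G : Matrix (Fin n) (Fin m) ℝ) (b : Fin m → ℝ)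
    (W : Matrix (Fin n) (Fin n) ℝ) (hW : W.PosDef) (δ : ℝ) (hδ : 0 < δ)
    (ωt : Fin m → ℝ) (hfeas : dualFeas m ωt)
    (hopt : ∀ ω : Fin m → ℝ, dualFeas m ω →
      (1 / 2) * (ωt ⬝ᵥ (Gᵀ * W * G) *ᵥ ωt) - b ⬝ᵥ ωt
        ≤ (1 / 2) * (ω ⬝ᵥ (Gᵀ * W * G) *ᵥ ω) - b ⬝ᵥ ω)
    (hin : ∀ i, |(W *ᵥ G *ᵥ ωt) i| ≤ δ) :
    dualFeas m ωt ∧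
    ∀ (ω : Fin m → ℝ) (γ : Fin n → ℝ), dualFeas m ω →
      dualObj n m G b W δ ω γ ≤ dualObj n m G b W δ ωt 0 :=
  stmt18_general n m G b W hW δ ωt hfeas hopt hin
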